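/- arXiv:2210.04081 — 2 statements merged into one kernel-verified Lean document; each statement's English description precedes it below -/
import Mathlib

section
/- Let M be an n×n real matrix, X an n×d real matrix, W a d×c real matrix, and α a real number with 0 < α < 1 such that the operator norm of (1−α)·M is strictly less than 1. Define the APPNP iteration by H₀ = X·W and H_k = (1−α)·M·H_{k−1} + α·X·W for k ≥ 1. Then the sequence (H_K) converges as K → ∞, and its limit is α·(I − (1−α)·M)^{−1}·X·W, the PPNP output. -/
open scoped Matrix.Norms.L2Operator

/-!
APPNP is the affine recurrence `H ↦ A * H + b` with `A = (1 - α) • M` and `b = α • (X * W)`.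
Its `K`-th iterate is `(∑ k < K, A ^ k) * b + A ^ K * H 0`; when `‖A‖ < 1` the Neumann series
`∑ A ^ k` converges to `(1 - A)⁻¹` and `A ^ K → 0`, so the iterates converge to `(1 - A)⁻¹ * b`
whatever the starting point.
-/

open Filter Finset Topology

namespace Matrix

variable {m p : Type*} [Fintype m] [DecidableEq m]

theorem eq_geom_sum_mul_add_pow_mul_of_affine_recurrence {R : Type*} [Semiring R]
    (A : Matrix m m R) (b : Matrix m p R) (x : ℕ → Matrix m p R)
    (hx : ∀ k, x (k + 1) = A * x k + b) (K : ℕ) :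
    x K = (∑ k ∈ range K, A ^ k) * b + A ^ K * x 0 := by
  induction K with
  | zero => simp
  | succ K ih =>
    rw [hx, ih, geom_sum_succ, pow_succ', Matrix.mul_add, Matrix.add_mul,
      Matrix.mul_assoc, Matrix.mul_assoc, Matrix.one_mul]
    abel

theorem tendsto_nonsing_inv_mul_of_affine_recurrence {𝕜 : Type*} [RCLike 𝕜] [Fintype p]
    (A : Matrix m m 𝕜) (hA : ‖A‖ < 1) (b : Matrix m p 𝕜) (x : ℕ → Matrix m p 𝕜)
    (hx : ∀ k, x (k + 1) = A * x k + b) :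
    Tendsto x atTop (𝓝 ((1 - A)⁻¹ * b)) := by
  have hmul : ∀ c : Matrix m p 𝕜, Continuous fun Q : Matrix m m 𝕜 => Q * c := fun c =>
    continuous_id.matrix_mul continuous_const
  have hseries : Tendsto (fun K => ∑ k ∈ range K, A ^ k) atTop (𝓝 (1 - A)⁻¹) := by
    rw [nonsing_inv_eq_ringInverse]
    exact (hasSum_geom_series_inverse A hA).tendsto_sum_nat
  have hpow : Tendsto (fun K => A ^ K) atTop (𝓝 0) :=
    tendsto_pow_atTop_nhds_zero_of_norm_lt_one hA
  have hlim := ((hmul b).tendsto _ |>.comp hseries).add ((hmul (x 0)).tendsto _ |>.comp hpow)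
  rw [Matrix.zero_mul, add_zero] at hlim
  simpa only [Function.comp_def,
    ← eq_geom_sum_mul_add_pow_mul_of_affine_recurrence A b x hx] using hlim

end Matrix

theorem appnp_tendsto_ppnp_general {n d c : ℕ}
    (M : Matrix (Fin n) (Fin n) ℝ) (X : Matrix (Fin n) (Fin d) ℝ)
    (W : Matrix (Fin d) (Fin c) ℝ) (α : ℝ)
    (hnorm : ‖(1 - α) • M‖ < 1)
    (H : ℕ → Matrix (Fin n) (Fin c) ℝ)
    (hrec : ∀ k : ℕ, H (k + 1) = (1 - α) • (M * H k) + α • (X * W)) :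
    Filter.Tendsto H Filter.atTop
      (nhds (α • (1 - (1 - α) • M)⁻¹ * X * W)) := by
  have hrec' : ∀ k, H (k + 1) = (1 - α) • M * H k + α • (X * W) := by
    simpa only [Matrix.smul_mul] using hrec
  have hlim := Matrix.tendsto_nonsing_inv_mul_of_affine_recurrence _ hnorm _ H hrec'
  rwa [Matrix.mul_smul, ← Matrix.smul_mul, ← Matrix.mul_assoc] at hlim

/-- APPNP converges to PPNP: under `0 < α < 1` and `‖(1-α) • M‖ < 1` (L2 operator norm),
the APPNP iterates `H 0 = X*W`, `H (K+1) = (1-α) • (M * H K) + α • (X*W)` converge as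
`K → ∞` to the PPNP output `α • (I - (1-α) • M)⁻¹ * X * W`. -/
theorem appnp_tendsto_ppnp {n d c : ℕ}
    (M : Matrix (Fin n) (Fin n) ℝ) (X : Matrix (Fin n) (Fin d) ℝ)
    (W : Matrix (Fin d) (Fin c) ℝ) (α : ℝ)
    (hα : 0 < α ∧ α < 1)
    (hnorm : ‖(1 - α) • M‖ < 1)
    (H : ℕ → Matrix (Fin n) (Fin c) ℝ)
    (h0 : H 0 = X * W)
    (hrec : ∀ k : ℕ, H (k + 1) = (1 - α) • (M * H k) + α • (X * W)) :
    Filter.Tendsto H Filter.atTop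
      (nhds (α • (1 - (1 - α) • M)⁻¹ * X * W)) :=
  appnp_tendsto_ppnp_general M X W α hnorm H hrec
end

section
/- Let M be an n×n real matrix, X an n×d real matrix, and for each l with 1 ≤ l ≤ K let W_{l,1} and W_{l,2} be d×d real weight matrices. Define the linearized GraphSAGE stacking by H₀ = X and H_l = H_{l−1}·W_{l,1} + M·H_{l−1}·W_{l,2} for 1 ≤ l ≤ K. Then there exist d×d real matrices V₀, V₁, …, V_K such that H_K = ∑_{k=0}^{K} M^k · X · V_k. -/
set_option maxHeartbeats 1000000


/-- Linearized GraphSAGE stacking is expressible in the concatenated multi-hop basis: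
if `H 0 = X` and `H l = H (l-1) * W l 1 + M * H (l-1) * W l 2` for `1 ≤ l ≤ K`, then
there are matrices `V k` with `H K = ∑_{k=0}^{K} M^k * X * V k`. -/
theorem linearized_sage_stacking {n d : ℕ}
    (M : Matrix (Fin n) (Fin n) ℝ) (X : Matrix (Fin n) (Fin d) ℝ)
    (W₁ W₂ : ℕ → Matrix (Fin d) (Fin d) ℝ) (K : ℕ)
    (H : ℕ → Matrix (Fin n) (Fin d) ℝ)
    (h0 : H 0 = X)
    (hrec : ∀ l : ℕ, 1 ≤ l → l ≤ K →
      H l = H (l - 1) * W₁ l + M * H (l - 1) * W₂ l) :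
    ∃ V : ℕ → Matrix (Fin d) (Fin d) ℝ,
      H K = ∑ k ∈ Finset.range (K + 1), M ^ k * X * V k := by
  suffices h : ∀ l, l ≤ K → ∃ V : ℕ → Matrix (Fin d) (Fin d) ℝ,
      H l = ∑ k ∈ Finset.range (l + 1), M ^ k * X * V k from h K le_rfl
  intro l
  induction l with
  | zero => intro _; exact ⟨fun _ => 1, by simp [h0]⟩
  | succ l ih =>
    intro hlK
    obtain ⟨V, hV⟩ := ih (Nat.le_of_succ_le hlK)
    refine ⟨fun k => (if k < l + 1 then V k * W₁ (l + 1) else 0) +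
      (if 1 ≤ k then V (k - 1) * W₂ (l + 1) else 0), ?_⟩
    have split : ∑ k ∈ Finset.range (l + 2),
        M ^ k * X * ((if k < l + 1 then V k * W₁ (l + 1) else 0) +
          (if 1 ≤ k then V (k - 1) * W₂ (l + 1) else 0))
      = (∑ k ∈ Finset.range (l + 2),
          M ^ k * X * (if k < l + 1 then V k * W₁ (l + 1) else 0)) +
        (∑ k ∈ Finset.range (l + 2),
          M ^ k * X * (if 1 ≤ k then V (k - 1) * W₂ (l + 1) else 0)) := by
      rw [← Finset.sum_add_distrib]
      exact Finset.sum_congr rfl fun k _ => by rw [Matrix.mul_add]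
    have h1 : ∑ k ∈ Finset.range (l + 2),
        M ^ k * X * (if k < l + 1 then V k * W₁ (l + 1) else 0)
      = ∑ k ∈ Finset.range (l + 1), M ^ k * X * (V k * W₁ (l + 1)) := by
      rw [Finset.sum_range_succ, if_neg (lt_irrefl _), Matrix.mul_zero, add_zero]
      exact Finset.sum_congr rfl fun k hk => by rw [if_pos (Finset.mem_range.mp hk)]
    have h2 : ∑ k ∈ Finset.range (l + 2),
        M ^ k * X * (if 1 ≤ k then V (k - 1) * W₂ (l + 1) else 0)
      = ∑ k ∈ Finset.range (l + 1), M ^ (k + 1) * X * (V k * W₂ (l + 1)) := by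
      rw [Finset.sum_range_succ', if_neg (by omega), Matrix.mul_zero, add_zero]
      exact Finset.sum_congr rfl fun k _ => by
        rw [if_pos (Nat.succ_le_succ (Nat.zero_le k)), Nat.add_sub_cancel]
    rw [hrec (l + 1) (Nat.succ_le_succ (Nat.zero_le l)) hlK]
    simp only [Nat.add_sub_cancel]
    rw [hV, split, h1, h2, Matrix.sum_mul, Matrix.mul_sum, Matrix.sum_mul]
    congr 1
    · exact Finset.sum_congr rfl fun k _ => by rw [Matrix.mul_assoc]
    · exact Finset.sum_congr rfl fun k _ => by
        simp only [pow_succ', Matrix.mul_assoc]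
end
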